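/- The creation operator B_M(μ̄) = B⁽⁰⁾_M(μ̄) of the deformed model decomposes in terms of the undeformed operators as B_M(μ̄) = Σ_{k=0}^{M-1} ξᵏ Σ_{j₁<⋯<j_{M-k}} B_{M-k}(μ_{j₁},…,μ_{j_{M-k}})₀ · p̂ᵏ^{(M-k)}(μ̄ \ {μ_{j₁},…,μ_{j_{M-k}}}) + ξᴹ p̂_M^{(0)}(μ̄), where B_{M-k}(·)₀ = X⁻(·)₀⋯X⁻(·)₀ is the product of undeformed lowering currents and p̂ᵢ^{(j)}(μ₁,…,μᵢ) = μ₁(-h_gl/2 + j)·μ₂(-h_gl/2 + j+1)⋯μᵢ(-h_gl/2 + i+j-1). -/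
import Mathlib


noncomputable section

/-- The current `h(λ) = Σ_a (h_a/(λ-z_a) + ξ z_a X⁺_a)`. -/
def hCur {A : Type*} [Ring A] [Algebra ℂ A] {N : ℕ} (z : Fin N → ℂ) (ξ : ℂ)
    (H Xp : Fin N → A) (l : ℂ) : A :=
  ∑ a, ((l - z a)⁻¹ • H a + (ξ * z a) • Xp a)

/-- The current `X⁻(λ) = Σ_a (X⁻_a/(λ-z_a) - (ξ/2)λ h_a)`. -/
def XmCur {A : Type*} [Ring A] [Algebra ℂ A] {N : ℕ} (z : Fin N → ℂ) (ξ : ℂ)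
    (H Xm : Fin N → A) (l : ℂ) : A :=
  ∑ a, ((l - z a)⁻¹ • Xm a - (ξ / 2 * l) • H a)

/-- The current `X⁺(λ) = Σ_a X⁺_a/(λ-z_a)`. -/
def XpCur {A : Type*} [Ring A] [Algebra ℂ A] {N : ℕ} (z : Fin N → ℂ)
    (Xp : Fin N → A) (l : ℂ) : A :=
  ∑ a, (l - z a)⁻¹ • Xp a

/-- The λ-derivative `h'(λ) = -Σ_a h_a/(λ-z_a)²` of the current `h(λ)`. -/
def hdCur {A : Type*} [Ring A] [Algebra ℂ A] {N : ℕ} (z : Fin N → ℂ)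
    (H : Fin N → A) (l : ℂ) : A :=
  ∑ a, (-((l - z a) ^ 2)⁻¹) • H a

/-- The generating function `t(λ) = h(λ)² - 2h'(λ) + 2(2X⁻(λ) + ξλ)X⁺(λ)`. -/
def tCur {A : Type*} [Ring A] [Algebra ℂ A] {N : ℕ} (z : Fin N → ℂ) (ξ : ℂ)
    (H Xp Xm : Fin N → A) (l : ℂ) : A :=
  hCur z ξ H Xp l * hCur z ξ H Xp l - (2 : ℂ) • hdCur z H l +
    ((2 : ℂ) • ((2 : ℂ) • XmCur z ξ H Xm l + (ξ * l) • (1 : A))) * XpCur z Xp l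

/-- The sl₂ relations at every site, and commutativity of generators at distinct sites. -/
def GaudinSites {A : Type*} [Ring A] [Algebra ℂ A] {N : ℕ}
    (H Xp Xm : Fin N → A) : Prop :=
  (∀ a, H a * Xp a - Xp a * H a = (2 : ℂ) • Xp a) ∧
  (∀ a, Xp a * Xm a - Xm a * Xp a = H a) ∧
  (∀ a, H a * Xm a - Xm a * H a = (-2 : ℂ) • Xm a) ∧
  (∀ a b, a ≠ b → ∀ x ∈ ({H a, Xp a, Xm a} : Set A), ∀ y ∈ ({H b, Xp b, Xm b} : Set A),
    Commute x y)

/-- The ordered product `B⁽ᵏ⁾_M(μ₁,…,μ_M) = (X⁻(μ₁)+kξμ₁)⋯(X⁻(μ_M)+(M+k-1)ξμ_M)`. -/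
def Bop {A : Type*} [Ring A] [Algebra ℂ A] (Xm : ℂ → A) (ξ : ℂ) :
    ℕ → List ℂ → A
  | _, [] => 1
  | k, μ :: rest => (Xm μ + ((k : ℂ) * ξ * μ) • (1 : A)) * Bop Xm ξ (k + 1) rest

/-- The undeformed lowering current `X⁻(λ)₀ = Σ_a X⁻_a/(λ-z_a)`. -/
def XmCur0 {A : Type*} [Ring A] [Algebra ℂ A] {N : ℕ} (z : Fin N → ℂ)
    (Xm : Fin N → A) (l : ℂ) : A :=
  ∑ a, (l - z a)⁻¹ • Xm a

/-- The operator `p̂ᵢ⁽ʲ⁾(μ₁,…,μᵢ) = μ₁(-h_gl/2 + j)·μ₂(-h_gl/2 + j+1)⋯μᵢ(-h_gl/2 + i+j-1)`,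
an ordered product indexed by the list of arguments. -/
def pHat {A : Type*} [Ring A] [Algebra ℂ A] (hgl : A) : ℕ → List ℂ → A
  | _, [] => 1
  | j, μ :: rest => (μ • ((-(1 / 2 : ℂ)) • hgl + (j : ℂ) • (1 : A))) * pHat hgl (j + 1) rest


section CreationAux

variable {A : Type*} [Ring A] [Algebra ℂ A]

/-- Auxiliary: the factor `l·(-h/2 + j)` appearing in `pHat`. -/
def Pt (h : A) (j : ℕ) (l : ℂ) : A := l • ((-(1 / 2 : ℂ)) • h + (j : ℂ) • (1 : A))

lemma pHat_cons (h : A) (j : ℕ) (a : ℂ) (L : List ℂ) :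
    pHat h j (a :: L) = Pt h j a * pHat h (j + 1) L := rfl

lemma pHat_nil (h : A) (j : ℕ) : pHat h j [] = 1 := rfl

lemma Bop_nil (Xc : ℂ → A) (ξ : ℂ) (k : ℕ) : Bop Xc ξ k [] = 1 := rfl

lemma Bop_cons (Xc : ℂ → A) (ξ : ℂ) (k : ℕ) (a : ℂ) (L : List ℂ) :
    Bop Xc ξ k (a :: L) = (Xc a + ((k : ℂ) * ξ * a) • (1 : A)) * Bop Xc ξ (k + 1) L := rfl

lemma Pt_swap {h : A} {X : ℂ → A} (hX : ∀ m, h * X m = X m * h - (2 : ℂ) • X m)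
    (j : ℕ) (l m : ℂ) : Pt h j l * X m = X m * Pt h (j + 1) l := by
  simp only [Pt, smul_mul_assoc, mul_smul_comm, add_mul, mul_add, one_mul, mul_one, smul_add, hX]
  push_cast
  match_scalars <;> ring

lemma prodX_Pt {h : A} {X : ℂ → A}
    (hswap : ∀ (j : ℕ) (l m : ℂ), Pt h j l * X m = X m * Pt h (j + 1) l)
    (L : List ℂ) (j : ℕ) (l : ℂ) :
    (L.map X).prod * Pt h (j + L.length) l = Pt h j l * (L.map X).prod := by
  induction L generalizing j with
  | nil => simp
  | cons a L ih =>
      have : j + (a :: L).length = (j + 1) + L.length := by simp; omega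
      rw [List.map_cons, List.prod_cons, this, mul_assoc, ih (j + 1), ← mul_assoc,
        ← hswap j l a, mul_assoc]

lemma powerset_map' {α β : Type*} (e : α ↪ β) (s : Finset α) :
    (s.map e).powerset = s.powerset.map (Finset.mapEmbedding e).toEmbedding := by
  ext u
  simp only [Finset.mem_powerset, Finset.subset_map_iff, Finset.mem_map,
    RelEmbedding.coe_toEmbedding, Finset.mapEmbedding_apply]
  constructor
  · rintro ⟨t, ht, rfl⟩; exact ⟨t, ht, rfl⟩
  · rintro ⟨t, ht, rfl⟩; exact ⟨t, ht, rfl⟩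

lemma sort_map_succ {M : ℕ} (t : Finset (Fin M)) :
    (t.map ⟨Fin.succ, Fin.succ_injective M⟩).sort (· ≤ ·) =
      (t.sort (· ≤ ·)).map Fin.succ := by
  rw [Finset.sort, Finset.sort, Finset.map_val]
  exact (Multiset.map_sort _ _ _ _ (by
    intro a _ b _; exact (Fin.succ_le_succ_iff).symm)).symm

lemma compl_map_succ {M : ℕ} (t : Finset (Fin M)) :
    (t.map ⟨Fin.succ, Fin.succ_injective M⟩)ᶜ =
      insert 0 (tᶜ.map ⟨Fin.succ, Fin.succ_injective M⟩) := by
  ext x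
  induction x using Fin.cases with
  | zero => simp [(Fin.succ_ne_zero _).symm, Fin.succ_ne_zero]
  | succ y => simp [Fin.succ_inj, (Fin.succ_ne_zero y).symm, Fin.succ_ne_zero y]

lemma compl_insert_zero {M : ℕ} (t : Finset (Fin M)) :
    (insert (0 : Fin (M + 1)) (t.map ⟨Fin.succ, Fin.succ_injective M⟩))ᶜ =
      tᶜ.map ⟨Fin.succ, Fin.succ_injective M⟩ := by
  ext x
  induction x using Fin.cases with
  | zero => simp [Fin.succ_ne_zero]
  | succ y => simp [Fin.succ_inj, (Fin.succ_ne_zero y).symm, Fin.succ_ne_zero y]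

lemma sort_insert_zero {M : ℕ} (u : Finset (Fin (M + 1))) (h : 0 ∉ u) :
    (insert (0 : Fin (M + 1)) u).sort (· ≤ ·) = 0 :: u.sort (· ≤ ·) :=
  Finset.sort_insert _ (fun b _ => Fin.zero_le b) h

lemma zero_notMem_map_succ {M : ℕ} (t : Finset (Fin M)) :
    (0 : Fin (M + 1)) ∉ t.map ⟨Fin.succ, Fin.succ_injective M⟩ := by
  simp only [Finset.mem_map, Function.Embedding.coeFn_mk]
  rintro ⟨y, -, hy⟩
  exact Fin.succ_ne_zero y hy

lemma core (X Xc : ℂ → A) (h : A) (ξ : ℂ)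
    (hXc : ∀ (k : ℕ) (l : ℂ), Xc l + ((k : ℂ) * ξ * l) • (1 : A) = X l + ξ • Pt h k l)
    (hswap : ∀ (j : ℕ) (l m : ℂ), Pt h j l * X m = X m * Pt h (j + 1) l) :
    ∀ (M : ℕ) (μ : Fin M → ℂ) (k : ℕ),
      Bop Xc ξ k (List.ofFn μ) =
        ∑ s ∈ (Finset.univ : Finset (Fin M)).powerset,
          ξ ^ (M - s.card) •
            (((s.sort (· ≤ ·)).map fun i => X (μ i)).prod *
              pHat h (k + s.card) ((sᶜ.sort (· ≤ ·)).map μ)) := by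
  intro M
  induction M with
  | zero =>
      intro μ k
      have hc : (∅ᶜ : Finset (Fin 0)) = ∅ := by ext i; exact i.elim0
      have hu : (Finset.univ : Finset (Fin 0)) = ∅ := rfl
      simp [hu, hc, List.ofFn_zero, Bop_nil, pHat_nil]
  | succ M ih =>
      intro μ k
      have key : ∀ t ∈ (Finset.univ : Finset (Fin M)).powerset,
          (ξ ^ (M + 1 - (t.map ⟨Fin.succ, Fin.succ_injective M⟩).card) •
            ((((t.map ⟨Fin.succ, Fin.succ_injective M⟩).sort (· ≤ ·)).map
                fun i => X (μ i)).prod *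
              pHat h (k + (t.map ⟨Fin.succ, Fin.succ_injective M⟩).card)
                (((t.map ⟨Fin.succ, Fin.succ_injective M⟩)ᶜ.sort (· ≤ ·)).map μ))) =
          ξ • (Pt h k (μ 0) *
            (ξ ^ (M - t.card) •
              (((t.sort (· ≤ ·)).map fun i => X (μ i.succ)).prod *
                pHat h ((k + 1) + t.card) ((tᶜ.sort (· ≤ ·)).map fun i => μ i.succ)))) := by
        intro t ht
        have hc : t.card ≤ M := (Finset.card_le_univ t).trans_eq (Fintype.card_fin M)
        rw [Finset.card_map, sort_map_succ, compl_map_succ,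
          sort_insert_zero _ (zero_notMem_map_succ _), sort_map_succ, List.map_cons,
          List.map_map, List.map_map, pHat_cons]
        have hmv := prodX_Pt hswap ((t.sort (· ≤ ·)).map fun i => μ i.succ) k (μ 0)
        rw [List.map_map, List.length_map, Finset.length_sort] at hmv
        have hcomp1 : (fun i => X (μ i)) ∘ Fin.succ = fun i => X (μ i.succ) := rfl
        have hcomp2 : X ∘ (fun i : Fin M => μ i.succ) = fun i => X (μ i.succ) := rfl
        have hcomp3 : μ ∘ Fin.succ = fun i => μ i.succ := rfl
        rw [hcomp1, hcomp3]
        rw [hcomp2] at hmv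
        have harith : M + 1 - t.card = (M - t.card) + 1 := by omega
        rw [harith, ← mul_assoc, hmv, pow_succ]
        have : k + t.card + 1 = (k + 1) + t.card := by omega
        rw [this, mul_assoc]
        rw [mul_smul, smul_comm, mul_smul_comm]
      have key2 : ∀ t ∈ (Finset.univ : Finset (Fin M)).powerset,
          (ξ ^ (M + 1 - (insert 0 (t.map ⟨Fin.succ, Fin.succ_injective M⟩)).card) •
            ((((insert 0 (t.map ⟨Fin.succ, Fin.succ_injective M⟩)).sort (· ≤ ·)).map
                fun i => X (μ i)).prod *
              pHat h (k + (insert 0 (t.map ⟨Fin.succ, Fin.succ_injective M⟩)).card)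
                (((insert 0 (t.map ⟨Fin.succ, Fin.succ_injective M⟩))ᶜ.sort (· ≤ ·)).map μ))) =
          X (μ 0) *
            (ξ ^ (M - t.card) •
              (((t.sort (· ≤ ·)).map fun i => X (μ i.succ)).prod *
                pHat h ((k + 1) + t.card) ((tᶜ.sort (· ≤ ·)).map fun i => μ i.succ))) := by
        intro t ht
        rw [Finset.card_insert_of_notMem (zero_notMem_map_succ _), Finset.card_map,
          sort_insert_zero _ (zero_notMem_map_succ _), compl_insert_zero, sort_map_succ,
          sort_map_succ, List.map_cons, List.map_map, List.map_map, List.prod_cons]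
        have hcomp1 : (fun i => X (μ i)) ∘ Fin.succ = fun i => X (μ i.succ) := rfl
        have hcomp3 : μ ∘ Fin.succ = fun i => μ i.succ := rfl
        rw [hcomp1, hcomp3]
        have : M + 1 - (t.card + 1) = M - t.card := by omega
        have h2 : k + (t.card + 1) = (k + 1) + t.card := by omega
        rw [this, h2, mul_smul_comm, mul_assoc]
      rw [List.ofFn_succ, Bop_cons, hXc, ih (fun i => μ i.succ) (k + 1)]
      rw [Fin.univ_succ, Finset.cons_eq_insert, Finset.sum_powerset_insert (by
        exact zero_notMem_map_succ _), powerset_map', Finset.sum_map, Finset.sum_map]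
      simp only [RelEmbedding.coe_toEmbedding, Finset.mapEmbedding_apply]
      rw [Finset.sum_congr rfl key, Finset.sum_congr rfl key2,
        ← Finset.smul_sum, ← Finset.mul_sum, ← Finset.mul_sum]
      rw [add_mul, smul_mul_assoc]
      exact add_comm _ _

lemma reorg {β : Type*} [AddCommMonoid β] [Module ℂ β] {M : ℕ} (ξ : ℂ)
    (F : Finset (Fin M) → ℕ → β) :
    ∑ s ∈ (Finset.univ : Finset (Fin M)).powerset, ξ ^ (M - s.card) • F s s.card =
      (∑ k ∈ Finset.range M, ξ ^ k •
        ∑ s ∈ Finset.univ.powersetCard (M - k), F s (M - k)) +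
        ξ ^ M • F ∅ 0 := by
  rw [Finset.sum_powerset, Finset.card_fin, Finset.sum_range_succ']
  congr 1
  · conv_rhs => rw [← Finset.sum_range_reflect]
    refine Finset.sum_congr rfl fun i hi => ?_
    have hiM : i < M := Finset.mem_range.mp hi
    have h1 : M - (M - 1 - i) = i + 1 := by omega
    rw [h1, Finset.smul_sum]
    refine Finset.sum_congr rfl fun s hs => ?_
    have hcard : s.card = i + 1 := (Finset.mem_powersetCard.mp hs).2
    rw [hcard]
    have h2 : M - (i + 1) = M - 1 - i := by omega
    rw [h2]
  · simp

end CreationAux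

/-- the decomposition of the creation operator `B_M(μ̄) = B⁽⁰⁾_M(μ̄)` of the
deformed model in terms of the undeformed operators:
`B_M(μ̄) = Σ_{k=0}^{M-1} ξᵏ Σ_{j₁<⋯<j_{M-k}} B_{M-k}(μ_{j₁},…,μ_{j_{M-k}})₀ ·
p̂ₖ^{(M-k)}(μ̄∖{μ_{j₁},…,μ_{j_{M-k}}}) + ξᴹ p̂_M^{(0)}(μ̄)`, where
`B_{M-k}(…)₀ = X⁻(μ_{j₁})₀⋯X⁻(μ_{j_{M-k}})₀`. -/
theorem creation_operator_decomposition {A : Type*} [Ring A] [Algebra ℂ A] {N M : ℕ}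
    (z : Fin N → ℂ) (ξ : ℂ) (H Xp Xm : Fin N → A)
    (hz : Function.Injective z) (hG : GaudinSites H Xp Xm)
    (μ : Fin M → ℂ) (hμinj : Function.Injective μ) (hμz : ∀ i, μ i ∉ Set.range z) :
    Bop (XmCur z ξ H Xm) ξ 0 (List.ofFn μ) =
      (∑ k ∈ Finset.range M, ξ ^ k •
        ∑ s ∈ Finset.univ.powersetCard (M - k),
          ((s.sort (· ≤ ·)).map fun i => XmCur0 z Xm (μ i)).prod *
            pHat (∑ a, H a) (M - k) ((sᶜ.sort (· ≤ ·)).map μ)) +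
      ξ ^ M • pHat (∑ a, H a) 0 (List.ofFn μ) := by
  obtain ⟨-, -, h3, h4⟩ := hG
  have hX : ∀ m, (∑ a, H a) * XmCur0 z Xm m =
      XmCur0 z Xm m * (∑ a, H a) - (2 : ℂ) • XmCur0 z Xm m := by
    have hrel : ∀ b, (∑ a, H a) * Xm b = Xm b * (∑ a, H a) - (2 : ℂ) • Xm b := by
      intro b
      have key : ∀ a, H a * Xm b = Xm b * H a + (if a = b then ((-2 : ℂ)) • Xm b else 0) := by
        intro a
        by_cases hab : a = b
        · subst hab
          simp only [if_pos rfl]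
          rw [← sub_eq_iff_eq_add'] at *
          exact h3 a
        · have hcomm : Commute (H a) (Xm b) :=
            h4 a b hab (H a) (by simp) (Xm b) (by simp)
          simp [if_neg hab, hcomm.eq]
      rw [Finset.sum_mul, Finset.mul_sum]
      simp only [key, Finset.sum_add_distrib, Finset.sum_ite_eq', Finset.mem_univ, if_pos]
      module
    intro m
    unfold XmCur0
    rw [Finset.mul_sum, Finset.sum_mul]
    simp only [mul_smul_comm, smul_mul_assoc, hrel, smul_sub, Finset.smul_sum]
    rw [Finset.sum_sub_distrib]
    congr 1
    exact Finset.sum_congr rfl fun b _ => by rw [smul_comm]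
  have hswap : ∀ (j : ℕ) (l m : ℂ), Pt (∑ a, H a) j l * XmCur0 z Xm m =
      XmCur0 z Xm m * Pt (∑ a, H a) (j + 1) l := Pt_swap hX
  have hXc : ∀ (k : ℕ) (l : ℂ), XmCur z ξ H Xm l + ((k : ℂ) * ξ * l) • (1 : A) =
      XmCur0 z Xm l + ξ • Pt (∑ a, H a) k l := by
    intro k l
    unfold XmCur XmCur0 Pt
    rw [Finset.sum_sub_distrib, ← Finset.smul_sum]
    match_scalars <;> ring
  rw [core (XmCur0 z Xm) (XmCur z ξ H Xm) (∑ a, H a) ξ hXc hswap M μ 0]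
  have hre := reorg ξ (fun (s : Finset (Fin M)) (j : ℕ) =>
    ((s.sort (· ≤ ·)).map fun i => XmCur0 z Xm (μ i)).prod *
      pHat (∑ a, H a) j ((sᶜ.sort (· ≤ ·)).map μ))
  simp only [zero_add]
  rw [hre]
  congr 1
  simp [Finset.sort_empty, List.ofFn_eq_map, Fin.sort_univ]

end
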